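/- arXiv:1903.06455 — 2 statements merged into one kernel-verified Lean document; each statement's English description precedes it below -/
import Mathlib

section
/- Suppose reals p_a, p_g, p_c, p_t and parameters v_a, v_t, v_c, v_g > 0, w_a, w_t, w_c, w_g ≥ 0, r_Y, r_R ∈ ℝ satisfy the linear system: −(v_t+v_c+w_g)·p_a + w_a·p_g + v_a·(p_c+p_t) = r_R; w_g·p_a − (v_t+v_c+w_a)·p_g + v_g·(p_c+p_t) = −r_R; −(v_a+v_g+w_t)·p_c + w_c·p_t + v_c·(p_a+p_g) = r_Y; w_t·p_c − (v_a+v_g+w_c)·p_t + v_t·(p_a+p_g) = −r_Y; and p_a + p_g + p_c + p_t = 1. Then, with v_Y = v_t+v_c, v_R = v_a+v_g, w_Y = w_t+w_c, w_R = w_a+w_g, one has p_a + p_g = v_R/(v_Y+v_R), p_c + p_t = v_Y/(v_Y+v_R), p_a = (v_a·(p_c+p_t) + w_a·(p_a+p_g) − r_R)/(w_R+v_Y), p_g = (v_g·(p_c+p_t) + w_g·(p_a+p_g) + r_R)/(w_R+v_Y), p_c = (v_c·(p_a+p_g) + w_c·(p_c+p_t) − r_Y)/(w_Y+v_R), and p_t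 = (v_t·(p_a+p_g) + w_t·(p_c+p_t) + r_Y)/(w_Y+v_R). -/
/-- First moments of an invariant translation-invariant measure for the RN+YpR model:
the stationarity linear system for the one-site probabilities `p_a, p_g, p_c, p_t`
determines them as in Proposition `RN+YpR_mu-a-t-c-g`. -/
theorem stmt14 (pa pg pc pt va vt vc vg wa wt wc wg rY rR : ℝ)
    (hva : 0 < va) (hvt : 0 < vt) (hvc : 0 < vc) (hvg : 0 < vg)
    (hwa : 0 ≤ wa) (hwt : 0 ≤ wt) (hwc : 0 ≤ wc) (hwg : 0 ≤ wg)
    (e1 : -(vt + vc + wg) * pa + wa * pg + va * (pc + pt) = rR)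
    (e2 : wg * pa - (vt + vc + wa) * pg + vg * (pc + pt) = -rR)
    (e3 : -(va + vg + wt) * pc + wc * pt + vc * (pa + pg) = rY)
    (e4 : wt * pc - (va + vg + wc) * pt + vt * (pa + pg) = -rY)
    (e5 : pa + pg + pc + pt = 1) :
    pa + pg = (va + vg) / ((vt + vc) + (va + vg)) ∧
    pc + pt = (vt + vc) / ((vt + vc) + (va + vg)) ∧
    pa = (va * (pc + pt) + wa * (pa + pg) - rR) / ((wa + wg) + (vt + vc)) ∧
    pg = (vg * (pc + pt) + wg * (pa + pg) + rR) / ((wa + wg) + (vt + vc)) ∧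
    pc = (vc * (pa + pg) + wc * (pc + pt) - rY) / ((wt + wc) + (va + vg)) ∧
    pt = (vt * (pa + pg) + wt * (pc + pt) + rY) / ((wt + wc) + (va + vg)) := by
  have h1 : (0:ℝ) < (vt + vc) + (va + vg) := by linarith
  have h2 : (0:ℝ) < (wa + wg) + (vt + vc) := by linarith
  have h3 : (0:ℝ) < (wt + wc) + (va + vg) := by linarith
  refine ⟨?_, ?_, ?_, ?_, ?_, ?_⟩ <;> rw [eq_div_iff (by positivity)]
  · linear_combination -e1 - e2 + (va + vg) * e5
  · linear_combination e1 + e2 + (vt + vc) * e5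
  · linear_combination -e1
  · linear_combination -e2
  · linear_combination -e3
  · linear_combination -e4
end

section
/- For the T92+cpg rates: let v > 0, w ≥ 0, r ≥ 0, θ ∈ [0,1], set v_Y = v, v_R = v (so μ(Y) = μ(R) = 1/2 by the stationarity formulas), and suppose p_a, p_t, p_c, p_g solve the stationarity system with w_a = w_t = (1−θ)w, v_a = v_t = (1−θ)v, w_c = w_g = θw, v_c = v_g = θv, and r_Y = −r_R = r·q for some q ∈ [0,1]. Then p_a = p_t = (1−θ)/2 + r·q/(v+w) and p_c = p_g = θ/2 − r·q/(v+w). -/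
/-!
Subtracting the two equations of each complementary pair (`a`/`t` and `g`/`c`) removes the
`r·q` source terms and leaves a homogeneous `2 × 2` system in `p_a − p_t` and `p_g − p_c` whose
determinant is `2v(v + w) ≠ 0`, so the marginals are strand-symmetric. Adding the `a`/`t`
equations then gives `(v + w)(p_a + p_t) = (1 − θ)(v + w) + 2rq`, and normalisation fixes
`p_c + p_g`.
-/

theorem eq_zero_of_mul_add_mul_eq_zero {R : Type*} [CommRing R] [NoZeroDivisors R]
    {a b c d x y : R} (h₁ : a * x + b * y = 0) (h₂ : c * x + d * y = 0)
    (hdet : a * d - b * c ≠ 0) : x = 0 ∧ y = 0 := by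
  have hx : (a * d - b * c) * x = 0 := by linear_combination d * h₁ - b * h₂
  have hy : (a * d - b * c) * y = 0 := by linear_combination a * h₂ - c * h₁
  exact ⟨(mul_eq_zero.mp hx).resolve_left hdet, (mul_eq_zero.mp hy).resolve_left hdet⟩

namespace T92cpg

variable {pa pg pc pt v w θ s : ℝ}

theorem strand_symmetric (hv : v ≠ 0) (hvw : v + w ≠ 0)
    (e1 : -(((1 - θ) * v) + (θ * v) + (θ * w)) * pa + ((1 - θ) * w) * pg
        + ((1 - θ) * v) * (pc + pt) = -s)
    (e2 : (θ * w) * pa - (((1 - θ) * v) + (θ * v) + ((1 - θ) * w)) * pg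
        + (θ * v) * (pc + pt) = s)
    (e3 : -(((1 - θ) * v) + (θ * v) + ((1 - θ) * w)) * pc + (θ * w) * pt
        + (θ * v) * (pa + pg) = s)
    (e4 : ((1 - θ) * w) * pc - (((1 - θ) * v) + (θ * v) + (θ * w)) * pt
        + ((1 - θ) * v) * (pa + pg) = -s) :
    pa = pt ∧ pg = pc := by
  have hat : ((2 - θ) * v + θ * w) * (pa - pt) + (1 - θ) * (v - w) * (pg - pc) = 0 := by
    linear_combination e4 - e1
  have hgc : θ * (w - v) * (pa - pt) + (-((1 + θ) * v + (1 - θ) * w)) * (pg - pc) = 0 := by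
    linear_combination e2 - e3
  have hdet : ((2 - θ) * v + θ * w) * (-((1 + θ) * v + (1 - θ) * w))
      - (1 - θ) * (v - w) * (θ * (w - v)) = -(2 * v * (v + w)) := by ring
  obtain ⟨h₁, h₂⟩ := eq_zero_of_mul_add_mul_eq_zero hat hgc
    (by rw [hdet]; exact neg_ne_zero.mpr (mul_ne_zero (mul_ne_zero two_ne_zero hv) hvw))
  exact ⟨sub_eq_zero.mp h₁, sub_eq_zero.mp h₂⟩

end T92cpg

theorem stmt16_general (pa pg pc pt v w r θ q : ℝ)
    (hv : 0 < v) (hw : 0 ≤ w)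
    (e1 : -(((1 - θ) * v) + (θ * v) + (θ * w)) * pa + ((1 - θ) * w) * pg
        + ((1 - θ) * v) * (pc + pt) = -(r * q))
    (e2 : (θ * w) * pa - (((1 - θ) * v) + (θ * v) + ((1 - θ) * w)) * pg
        + (θ * v) * (pc + pt) = r * q)
    (e3 : -(((1 - θ) * v) + (θ * v) + ((1 - θ) * w)) * pc + (θ * w) * pt
        + (θ * v) * (pa + pg) = r * q)
    (e4 : ((1 - θ) * w) * pc - (((1 - θ) * v) + (θ * v) + (θ * w)) * pt
        + ((1 - θ) * v) * (pa + pg) = -(r * q))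
    (e5 : pa + pg + pc + pt = 1) :
    pa = (1 - θ) / 2 + r * q / (v + w) ∧ pt = (1 - θ) / 2 + r * q / (v + w) ∧
    pc = θ / 2 - r * q / (v + w) ∧ pg = θ / 2 - r * q / (v + w) := by
  have hvw : v + w ≠ 0 := by positivity
  obtain ⟨hat, hgc⟩ := T92cpg.strand_symmetric hv.ne' hvw e1 e2 e3 e4
  subst hat hgc
  have hsum : (v + w) * (2 * pa) = (1 - θ) * (v + w) + 2 * (r * q) := by
    linear_combination -e1 - e4 + ((1 - θ) * (v + w)) * e5
  have hpa : pa = (1 - θ) / 2 + r * q / (v + w) := by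
    field_simp
    linear_combination hsum
  have hpg : pg = θ / 2 - r * q / (v + w) := by linear_combination e5 / 2 - hpa
  exact ⟨hpa, hpa, hpg, hpg⟩

/-- One-site marginals for the T92+cpg model: with the T92+cpg specialization of the
RN+YpR rates (`w_a = w_t = (1−θ)w`, `v_a = v_t = (1−θ)v`, `w_c = w_g = θw`,
`v_c = v_g = θv`, `r_Y = −r_R = r·q`), the stationarity system gives
`p_a = p_t = (1−θ)/2 + r·q/(v+w)` and `p_c = p_g = θ/2 − r·q/(v+w)`. -/
theorem stmt16 (pa pg pc pt v w r θ q : ℝ)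
    (hv : 0 < v) (hw : 0 ≤ w) (hr : 0 ≤ r)
    (hθ0 : 0 ≤ θ) (hθ1 : θ ≤ 1) (hq0 : 0 ≤ q) (hq1 : q ≤ 1)
    (e1 : -(((1 - θ) * v) + (θ * v) + (θ * w)) * pa + ((1 - θ) * w) * pg
        + ((1 - θ) * v) * (pc + pt) = -(r * q))
    (e2 : (θ * w) * pa - (((1 - θ) * v) + (θ * v) + ((1 - θ) * w)) * pg
        + (θ * v) * (pc + pt) = r * q)
    (e3 : -(((1 - θ) * v) + (θ * v) + ((1 - θ) * w)) * pc + (θ * w) * pt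
        + (θ * v) * (pa + pg) = r * q)
    (e4 : ((1 - θ) * w) * pc - (((1 - θ) * v) + (θ * v) + (θ * w)) * pt
        + ((1 - θ) * v) * (pa + pg) = -(r * q))
    (e5 : pa + pg + pc + pt = 1) :
    pa = (1 - θ) / 2 + r * q / (v + w) ∧ pt = (1 - θ) / 2 + r * q / (v + w) ∧
    pc = θ / 2 - r * q / (v + w) ∧ pg = θ / 2 - r * q / (v + w) :=
  stmt16_general pa pg pc pt v w r θ q hv hw e1 e2 e3 e4 e5
end
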